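/- arXiv:2008.03837 — 2 statements merged into one kernel-verified Lean document; each statement's English description precedes it below -/
import Mathlib

section
/- Suppose (b_L^{k})_{L,k} are elements of a finite-dimensional normed space with |b_L^{k+1}| uniformly bounded in L, suppose for each p ∈ (0,1] the limit S(p) = lim_{L→∞} S_L(p) exists where |S_L(p) − (∑_{j=0}^{k} (p^j/j!) b_L^{j})| ≤ (Cp)^{k+1} for all L, p, k, and suppose b^j := lim_{L→∞} b_L^{j} exists for all j ≤ k. Then b^{k+1} := lim_{L→∞} b_L^{k+1} exists, and equals lim_{p↓0} (k+1)! p^{−(k+1)} (S(p) − ∑_{j=0}^k (p^j/j!) b^j). -/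
/-!
Expanding to order `k + 1` shows that the difference quotient
`(k+1)! p^{-(k+1)} (S_L(p) - ∑_{j ≤ k} (p^j / j!) b_L^j)` approximates `b_L^{k+1}` to within
`(k+1)! C^{k+2} p`, uniformly in `L`. For fixed `p` these quotients converge as `L → ∞`, so a
quantitative Moore–Osgood argument makes `b_L^{k+1}` Cauchy, and the same bound, passed to the
limit in `L`, gives the convergence of the limiting quotient as `p ↓ 0`.
-/

open Filter Topology Finset

section UniformApproximation

variable {ι α E : Type*} [PseudoMetricSpace E] {l : Filter ι} {l' : Filter α}
  {x : ι → E} {w : α → ι → E} {g : α → ℝ}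

theorem cauchy_map_of_forall_dist_le [l.NeBot] [l'.NeBot] (hg : Tendsto g l' (𝓝 0))
    (hw : ∀ᶠ a in l', Cauchy (map (w a) l)) (hxw : ∀ᶠ a in l', ∀ i, dist (x i) (w a i) ≤ g a) :
    Cauchy (map x l) := by
  refine Metric.cauchy_iff.2 ⟨inferInstance, fun ε hε => ?_⟩
  obtain ⟨a, hga, hwa, hxwa⟩ :=
    ((hg.eventually (gt_mem_nhds (by positivity : (0 : ℝ) < ε / 3))).and (hw.and hxw)).exists
  obtain ⟨t, ht, hdiam⟩ := (Metric.cauchy_iff.1 hwa).2 (ε / 3) (by positivity)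
  refine ⟨x '' (w a ⁻¹' t), image_mem_map ht, ?_⟩
  rintro _ ⟨i, hi, rfl⟩ _ ⟨j, hj, rfl⟩
  calc dist (x i) (x j) ≤ dist (x i) (w a i) + dist (w a i) (w a j) + dist (w a j) (x j) :=
        dist_triangle4 _ _ _ _
    _ < ε / 3 + ε / 3 + ε / 3 := by
        have := hdiam _ hi _ hj
        rw [dist_comm (w a j)]
        linarith [hxwa i, hxwa j]
    _ = ε := by ring

theorem exists_tendsto_of_forall_dist_le [CompleteSpace E] [l.NeBot] [l'.NeBot] {T : α → E}
    (hg : Tendsto g l' (𝓝 0)) (hw : ∀ᶠ a in l', Tendsto (w a) l (𝓝 (T a)))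
    (hxw : ∀ᶠ a in l', ∀ i, dist (x i) (w a i) ≤ g a) :
    ∃ y, Tendsto x l (𝓝 y) ∧ Tendsto T l' (𝓝 y) := by
  obtain ⟨y, hy⟩ := cauchy_map_iff_exists_tendsto.1 <|
    cauchy_map_of_forall_dist_le hg (hw.mono fun a h => h.cauchy_map) hxw
  refine ⟨y, hy, tendsto_iff_dist_tendsto_zero.2 <| squeeze_zero' (.of_forall fun _ => dist_nonneg)
    ?_ hg⟩
  filter_upwards [hw, hxw] with a hwa hxwa
  rw [dist_comm]
  exact le_of_tendsto (hy.dist hwa) (.of_forall hxwa)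

end UniformApproximation

section TaylorCoefficients

variable {E : Type*} [NormedAddCommGroup E] [NormedSpace ℝ E]

noncomputable def taylorSum (b : ℕ → E) (n : ℕ) (p : ℝ) : E :=
  ∑ j ∈ range n, (p ^ j / (j.factorial : ℝ)) • b j

noncomputable def remainderQuotient (s : E) (b : ℕ → E) (n : ℕ) (p : ℝ) : E :=
  ((n.factorial : ℝ) / p ^ n) • (s - taylorSum b n p)

theorem norm_sub_remainderQuotient_le {s : E} {b : ℕ → E} {n : ℕ} {p r : ℝ} (hp : 0 < p)
    (h : ‖s - taylorSum b (n + 1) p‖ ≤ r) :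
    ‖b n - remainderQuotient s b n p‖ ≤ (n.factorial : ℝ) / p ^ n * r := by
  have hc : (0 : ℝ) < (n.factorial : ℝ) / p ^ n := by positivity
  have hb : b n = ((n.factorial : ℝ) / p ^ n) • ((p ^ n / (n.factorial : ℝ)) • b n) := by
    rw [smul_smul, div_mul_div_comm, mul_comm, div_self (by positivity), one_smul]
  have hsplit : b n - remainderQuotient s b n p =
      -(((n.factorial : ℝ) / p ^ n) • (s - taylorSum b (n + 1) p)) := by
    rw [taylorSum, sum_range_succ, ← taylorSum, remainderQuotient]
    conv_lhs => rw [hb]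
    rw [← smul_sub, ← smul_neg]
    congr 1
    abel
  rw [hsplit, norm_neg, norm_smul, Real.norm_of_nonneg hc.le]
  exact mul_le_mul_of_nonneg_left h hc.le

theorem tendsto_remainderQuotient {ι : Type*} {l : Filter ι} {s : ι → E} {b : ι → ℕ → E}
    {s₀ : E} {b₀ : ℕ → E} {n : ℕ} (p : ℝ) (hs : Tendsto s l (𝓝 s₀))
    (hb : ∀ j < n, Tendsto (fun i => b i j) l (𝓝 (b₀ j))) :
    Tendsto (fun i => remainderQuotient (s i) (b i) n p) l (𝓝 (remainderQuotient s₀ b₀ n p)) :=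
  (hs.sub <| tendsto_finsetSum _ fun j hj => (hb j (mem_range.1 hj)).const_smul _).const_smul _

end TaylorCoefficients

theorem stmt9_general {V : Type*} [NormedAddCommGroup V] [NormedSpace ℝ V] [FiniteDimensional ℝ V]
    (b : ℕ → ℕ → V) (k : ℕ) (C : ℝ)
    (SL : ℕ → ℝ → V) (S : ℝ → V)
    (hconv : ∀ p : ℝ, 0 < p → p ≤ 1 →
      Filter.Tendsto (fun L => SL L p) Filter.atTop (nhds (S p)))
    (hexp : ∀ L : ℕ, ∀ p : ℝ, 0 < p → p ≤ 1 → ∀ k' : ℕ,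
      ‖SL L p - ∑ j ∈ Finset.range (k' + 1), (p ^ j / (j.factorial : ℝ)) • b L j‖
        ≤ (C * p) ^ (k' + 1))
    (bLim : ℕ → V)
    (hblim : ∀ j ≤ k, Filter.Tendsto (fun L => b L j) Filter.atTop (nhds (bLim j))) :
    ∃ bk1 : V, Filter.Tendsto (fun L => b L (k + 1)) Filter.atTop (nhds bk1) ∧
      Filter.Tendsto (fun p : ℝ =>
          (((k + 1).factorial : ℝ) / p ^ (k + 1)) •
            (S p - ∑ j ∈ Finset.range (k + 1), (p ^ j / (j.factorial : ℝ)) • bLim j))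
        (nhdsWithin 0 (Set.Ioi 0)) (nhds bk1) := by
  have hp : ∀ᶠ p in 𝓝[>] (0 : ℝ), p ∈ Set.Ioc 0 1 := Ioc_mem_nhdsGT zero_lt_one
  set D : ℝ := ((k + 1).factorial : ℝ) * C ^ (k + 2)
  have hD : Tendsto (fun p : ℝ => D * p) (𝓝[>] 0) (𝓝 0) := by
    simpa using (tendsto_id.const_mul D).mono_left (nhdsWithin_le_nhds (a := (0 : ℝ)))
  refine exists_tendsto_of_forall_dist_le
    (w := fun p L => remainderQuotient (SL L p) (b L) (k + 1) p) hD ?_ ?_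
  · filter_upwards [hp] with p ⟨hp0, hp1⟩
    exact tendsto_remainderQuotient p (hconv p hp0 hp1) fun j hj => hblim j (by omega)
  · filter_upwards [hp] with p ⟨hp0, hp1⟩ L
    calc dist (b L (k + 1)) (remainderQuotient (SL L p) (b L) (k + 1) p)
        ≤ ((k + 1).factorial : ℝ) / p ^ (k + 1) * (C * p) ^ (k + 2) :=
          (dist_eq_norm _ _).trans_le <|
            norm_sub_remainderQuotient_le hp0 (hexp L p hp0 hp1 (k + 1))
      _ = D * p := by field_simp; ring

theorem stmt9 {V : Type*} [NormedAddCommGroup V] [NormedSpace ℝ V] [FiniteDimensional ℝ V]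
    (b : ℕ → ℕ → V) (k : ℕ) (C : ℝ) (hC : 0 < C) (M : ℝ)
    (hbd : ∀ L : ℕ, ‖b L (k + 1)‖ ≤ M)
    (SL : ℕ → ℝ → V) (S : ℝ → V)
    (hconv : ∀ p : ℝ, 0 < p → p ≤ 1 →
      Filter.Tendsto (fun L => SL L p) Filter.atTop (nhds (S p)))
    (hexp : ∀ L : ℕ, ∀ p : ℝ, 0 < p → p ≤ 1 → ∀ k' : ℕ,
      ‖SL L p - ∑ j ∈ Finset.range (k' + 1), (p ^ j / (j.factorial : ℝ)) • b L j‖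
        ≤ (C * p) ^ (k' + 1))
    (bLim : ℕ → V)
    (hblim : ∀ j ≤ k, Filter.Tendsto (fun L => b L j) Filter.atTop (nhds (bLim j))) :
    ∃ bk1 : V, Filter.Tendsto (fun L => b L (k + 1)) Filter.atTop (nhds bk1) ∧
      Filter.Tendsto (fun p : ℝ =>
          (((k + 1).factorial : ℝ) / p ^ (k + 1)) •
            (S p - ∑ j ∈ Finset.range (k + 1), (p ^ j / (j.factorial : ℝ)) • bLim j))
        (nhdsWithin 0 (Set.Ioi 0)) (nhds bk1) :=
  stmt9_general b k C SL S hconv hexp bLim hblim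
end

section
/- Let d ≥ 1 and let (τ_m)_{m≥0} be a sequence of reals with τ_m ≥ −C·3^{−m} for all m, and set J_n := J_0 − ∑_{m=0}^{n−1} τ_m for a given J_0 ≥ 0. Suppose there exist C, ε > 0 with J_n ≤ C·3^{−εn} + C·∑_{m=0}^{n} 3^{−ε(n−m)}·(τ_m + C·3^{−m}) and J_n ≥ 0 for all n. Then there exist γ ∈ (0, ε) and C' > 0 such that J_n ≤ C'·3^{−γn} and τ_n ≤ C'·3^{−γn} for all n ≥ 0. -/
/-!
Take `q = 3^(-ε)`, `ρ = 1/3`, `B = C` and the corrected increments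
`σ m = J m - J (m + 1) + B ρ^m ≥ 0` with discounted sum `F n = ∑_{m ≤ n} q^(n-m) σ m`.
For `Ψ n = F n + J (n + 1)` the new increment telescopes against `J`:
`Ψ (n + 1) = Ψ n - (1 - q) F n + B ρ^(n+1)`. Approximate monotonicity and the main hypothesis
give `Ψ n ≤ (1 + B) F n + B (q^n + ρ^n)`, so `Ψ` contracts by `κ = 1 - (1 - q)/(1 + B) < 1` up to
geometrically small errors and decays like `θ^n` for every `θ ∈ (max κ ρ, 1)`. Writing
`θ = 3^(-γ)` gives `γ < ε` because `θ > κ ≥ q`.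
-/

open Finset Real

noncomputable def discountedSum (q : ℝ) (σ : ℕ → ℝ) (n : ℕ) : ℝ :=
  ∑ m ∈ range (n + 1), q ^ (n - m) * σ m

theorem discountedSum_succ (q : ℝ) (σ : ℕ → ℝ) (n : ℕ) :
    discountedSum q σ (n + 1) = q * discountedSum q σ n + σ (n + 1) := by
  rw [discountedSum, sum_range_succ, Nat.sub_self, pow_zero, one_mul, discountedSum, mul_sum]
  congr 1
  refine sum_congr rfl fun m hm => ?_
  rw [Nat.succ_sub (mem_range_succ_iff.mp hm), pow_succ]
  ring

theorem discountedSum_nonneg {q : ℝ} {σ : ℕ → ℝ} (hq : 0 ≤ q) (hσ : ∀ m, 0 ≤ σ m) (n : ℕ) :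
    0 ≤ discountedSum q σ n :=
  sum_nonneg fun m _ => mul_nonneg (pow_nonneg hq _) (hσ m)

theorem exists_le_mul_pow_of_le_mul_add {u : ℕ → ℝ} {κ θ c : ℝ} (hκ : 0 ≤ κ) (hκθ : κ < θ)
    (hu : ∀ n, u (n + 1) ≤ κ * u n + c * θ ^ n) : ∃ M, ∀ n, u n ≤ M * θ ^ n := by
  set M := max (u 0) (c / (θ - κ))
  have hc : c ≤ M * (θ - κ) := (div_le_iff₀ (sub_pos.mpr hκθ)).mp (le_max_right _ _)
  refine ⟨M, fun n => ?_⟩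
  induction n with
  | zero => simp [M]
  | succ n ih =>
    have hθn : 0 ≤ θ ^ n := pow_nonneg (hκ.trans hκθ.le) n
    calc u (n + 1) ≤ κ * u n + c * θ ^ n := hu n
      _ ≤ κ * (M * θ ^ n) + M * (θ - κ) * θ ^ n := by gcongr
      _ = M * θ ^ (n + 1) := by ring

section DecayScheme

variable {J σ : ℕ → ℝ} {q ρ B θ : ℝ}

theorem discountedSum_add_le_mul_add
    (hq0 : 0 ≤ q) (hq1 : q ≤ 1) (hρ0 : 0 ≤ ρ) (hρ1 : ρ ≤ 1) (hB : 0 ≤ B)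
    (hqθ : q ≤ θ) (hρθ : ρ ≤ θ) (hσ0 : ∀ m, 0 ≤ σ m)
    (hσ : ∀ m, σ m = J m - J (m + 1) + B * ρ ^ m)
    (hJ : ∀ n, J n ≤ B * q ^ n + B * discountedSum q σ n) (n : ℕ) :
    discountedSum q σ (n + 1) + J (n + 1 + 1) ≤
      (1 - (1 - q) / (1 + B)) * (discountedSum q σ n + J (n + 1)) + 3 * B * θ ^ n := by
  set F := discountedSum q σ
  set η := (1 - q) / (1 + B)
  have hη : η * (1 + B) = 1 - q := div_mul_cancel₀ _ (by positivity)
  have hη0 : 0 ≤ η := div_nonneg (by linarith) (by positivity)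
  have hη1 : η ≤ 1 := (div_le_one (by positivity)).mpr (by linarith)
  have hrec : F (n + 1) + J (n + 1 + 1) = q * F n + J (n + 1) + B * ρ ^ (n + 1) := by
    rw [show F (n + 1) = q * F n + σ (n + 1) from discountedSum_succ q σ n, hσ (n + 1)]
    ring
  have hΨ : F n + J (n + 1) ≤ (1 + B) * F n + B * (q ^ n + ρ ^ n) := by
    linarith [hσ0 n, hσ n, hJ n]
  have hqn : q ^ n ≤ θ ^ n := pow_le_pow_left₀ hq0 hqθ n
  have hρn : ρ ^ n ≤ θ ^ n := pow_le_pow_left₀ hρ0 hρθ n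
  have hρn1 : ρ ^ (n + 1) ≤ ρ ^ n := pow_le_pow_of_le_one hρ0 hρ1 n.le_succ
  have herr : η * (B * (q ^ n + ρ ^ n)) ≤ 2 * B * θ ^ n := by
    calc η * (B * (q ^ n + ρ ^ n)) ≤ 1 * (B * (θ ^ n + θ ^ n)) := by gcongr
      _ = 2 * B * θ ^ n := by ring
  have hcontract : η * (F n + J (n + 1)) ≤ (1 - q) * F n + η * (B * (q ^ n + ρ ^ n)) :=
    calc η * (F n + J (n + 1)) ≤ η * ((1 + B) * F n + B * (q ^ n + ρ ^ n)) := by gcongr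
      _ = (1 - q) * F n + η * (B * (q ^ n + ρ ^ n)) := by rw [mul_add, ← mul_assoc, hη]
  have hBρ : B * ρ ^ (n + 1) ≤ B * θ ^ n := by gcongr; exact hρn1.trans hρn
  linarith

theorem exists_lt_one_le_mul_pow_of_le_discountedSum
    (hq0 : 0 ≤ q) (hq1 : q < 1) (hρ0 : 0 ≤ ρ) (hρ1 : ρ < 1) (hB : 0 ≤ B) (hσ0 : ∀ m, 0 ≤ σ m)
    (hσ : ∀ m, σ m = J m - J (m + 1) + B * ρ ^ m)
    (hJ : ∀ n, J n ≤ B * q ^ n + B * discountedSum q σ n) :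
    ∃ θ, q < θ ∧ θ < 1 ∧ ∃ M, ∀ n, J n ≤ M * θ ^ n := by
  set κ := 1 - (1 - q) / (1 + B)
  have hqκ : q ≤ κ := by
    have : (1 - q) / (1 + B) ≤ 1 - q := div_le_self (by linarith) (by linarith)
    linarith
  have hκ1 : κ < 1 := by
    have : 0 < (1 - q) / (1 + B) := div_pos (by linarith) (by linarith)
    linarith
  obtain ⟨θ, hκρθ, hθ1⟩ := exists_between (max_lt hκ1 hρ1)
  have hκθ : κ < θ := (le_max_left κ ρ).trans_lt hκρθ
  have hθ0 : 0 < θ := hq0.trans_lt (hqκ.trans_lt hκθ)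
  obtain ⟨M, hM⟩ := exists_le_mul_pow_of_le_mul_add (u := fun n => discountedSum q σ n + J (n + 1))
    (hq0.trans hqκ) hκθ
    (discountedSum_add_le_mul_add hq0 hq1.le hρ0 hρ1.le hB (hqκ.trans hκθ.le)
      ((le_max_right κ ρ).trans hκρθ.le) hσ0 hσ hJ)
  refine ⟨θ, hqκ.trans_lt hκθ, hθ1, max (J 0) (M / θ), ?_⟩
  rintro (_ | n)
  · simp
  · calc J (n + 1) ≤ M * θ ^ n :=
          (le_add_of_nonneg_left (discountedSum_nonneg hq0 hσ0 n)).trans (hM n)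
      _ = M / θ * θ ^ (n + 1) := by field_simp; ring
      _ ≤ max (J 0) (M / θ) * θ ^ (n + 1) := by gcongr; exact le_max_right _ _

end DecayScheme

theorem Real.rpow_neg_mul_natCast {x : ℝ} (hx : 0 ≤ x) (a : ℝ) (n : ℕ) :
    x ^ (-(a * n)) = (x ^ (-a)) ^ n := by
  rw [← neg_mul, rpow_mul_natCast hx]

theorem exists_rpow_neg_eq {b ε θ : ℝ} (hb : 1 < b) (hθ1 : θ < 1) (hεθ : b ^ (-ε) < θ) :
    ∃ γ, 0 < γ ∧ γ < ε ∧ b ^ (-γ) = θ := by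
  have hθ0 : 0 < θ := (rpow_pos_of_pos (by linarith) _).trans hεθ
  refine ⟨-logb b θ, neg_pos.mpr (logb_neg hb hθ0 hθ1), ?_, ?_⟩
  · exact neg_lt.mp ((lt_logb_iff_rpow_lt hb hθ0).mpr hεθ)
  · rw [neg_neg, rpow_logb (by linarith) hb.ne' hθ0]

theorem stmt19_general (C ε : ℝ) (hC : 0 < C) (hε : 0 < ε)
    (τ : ℕ → ℝ) (J0 : ℝ) (J : ℕ → ℝ)
    (hJ : ∀ n : ℕ, J n = J0 - ∑ m ∈ Finset.range n, τ m)
    (hτ : ∀ m : ℕ, τ m ≥ -C * (3 : ℝ) ^ (-(m : ℝ)))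
    (hJpos : ∀ n : ℕ, 0 ≤ J n)
    (hmain : ∀ n : ℕ, J n ≤ C * (3 : ℝ) ^ (-(ε * (n : ℝ)))
        + C * ∑ m ∈ Finset.range (n + 1),
            (3 : ℝ) ^ (-(ε * ((n : ℝ) - (m : ℝ)))) * (τ m + C * (3 : ℝ) ^ (-(m : ℝ)))) :
    ∃ γ : ℝ, 0 < γ ∧ γ < ε ∧ ∃ C' > (0 : ℝ), ∀ n : ℕ,
      J n ≤ C' * (3 : ℝ) ^ (-(γ * (n : ℝ))) ∧ τ n ≤ C' * (3 : ℝ) ^ (-(γ * (n : ℝ))) := by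
  have h3 : (0 : ℝ) ≤ 3 := by norm_num
  have hpow : ∀ m : ℕ, (3 : ℝ) ^ (-(m : ℝ)) = 3⁻¹ ^ m := fun m => by
    rw [rpow_neg h3, rpow_natCast, inv_pow]
  have hτJ : ∀ m, τ m = J m - J (m + 1) := fun m => by
    rw [hJ, hJ, sum_range_succ]
    ring
  have hdiscount : ∀ n, J n ≤ C * ((3 : ℝ) ^ (-ε)) ^ n
      + C * discountedSum (3 ^ (-ε)) (fun m => τ m + C * 3⁻¹ ^ m) n := fun n => by
    convert hmain n using 3
    · rw [rpow_neg_mul_natCast h3]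
    · refine sum_congr rfl fun m hm => ?_
      rw [← Nat.cast_sub (mem_range_succ_iff.mp hm), rpow_neg_mul_natCast h3, hpow]
  obtain ⟨θ, hεθ, hθ1, M, hM⟩ := exists_lt_one_le_mul_pow_of_le_discountedSum (ρ := 3⁻¹)
    (rpow_nonneg h3 _) (rpow_lt_one_of_one_lt_of_neg (by norm_num) (neg_neg_of_pos hε))
    (by norm_num) (by norm_num) hC.le (fun m => by linarith [hpow m ▸ hτ m])
    (fun m => by rw [hτJ]) hdiscount
  obtain ⟨γ, hγ0, hγε, rfl⟩ := exists_rpow_neg_eq (by norm_num) hθ1 hεθ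
  refine ⟨γ, hγ0, hγε, max M 1, by positivity, fun n => ?_⟩
  have hJn : J n ≤ max M 1 * (3 : ℝ) ^ (-(γ * n)) := by
    rw [rpow_neg_mul_natCast h3]
    exact (hM n).trans (by gcongr; exact le_max_left _ _)
  exact ⟨hJn, by linarith [hτJ n, hJpos (n + 1)]⟩

theorem stmt19 (d : ℕ) (hd : 1 ≤ d) (C ε : ℝ) (hC : 0 < C) (hε : 0 < ε)
    (τ : ℕ → ℝ) (J0 : ℝ) (hJ0 : 0 ≤ J0) (J : ℕ → ℝ)
    (hJ : ∀ n : ℕ, J n = J0 - ∑ m ∈ Finset.range n, τ m)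
    (hτ : ∀ m : ℕ, τ m ≥ -C * (3 : ℝ) ^ (-(m : ℝ)))
    (hJpos : ∀ n : ℕ, 0 ≤ J n)
    (hmain : ∀ n : ℕ, J n ≤ C * (3 : ℝ) ^ (-(ε * (n : ℝ)))
        + C * ∑ m ∈ Finset.range (n + 1),
            (3 : ℝ) ^ (-(ε * ((n : ℝ) - (m : ℝ)))) * (τ m + C * (3 : ℝ) ^ (-(m : ℝ)))) :
    ∃ γ : ℝ, 0 < γ ∧ γ < ε ∧ ∃ C' > (0 : ℝ), ∀ n : ℕ,
      J n ≤ C' * (3 : ℝ) ^ (-(γ * (n : ℝ))) ∧ τ n ≤ C' * (3 : ℝ) ^ (-(γ * (n : ℝ))) :=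
  stmt19_general C ε hC hε τ J0 J hJ hτ hJpos hmain
end
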